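/- arXiv:2604.27289 — 2 statements merged into one kernel-verified Lean document; each statement's English description precedes it below -/
import Mathlib

section
/- If gov_safe false t holds and for all r, gov_safe false (k r) holds, then gov_safe false (t >>= k). -/
/-- An event signature: a type of events, each with a response type. -/
structure EventSig : Type 1 where
  Ev : Type
  Ans : Ev → Type

/-- The polynomial functor whose M-type is the type of interaction trees. -/
def ITreeP (σ : EventSig) (R : Type) : PFunctor :=
  ⟨R ⊕ Unit ⊕ σ.Ev, fun a =>
    match a with
    | Sum.inl _ => Empty
    | Sum.inr (Sum.inl _) => Unit
    | Sum.inr (Sum.inr e) => σ.Ans e⟩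

/-- Coinductive interaction trees over the event signature `σ`. -/
def ITree (σ : EventSig) (R : Type) : Type := (ITreeP σ R).M

def ITree.Ret {σ : EventSig} {R : Type} (v : R) : ITree σ R :=
  PFunctor.M.mk ⟨Sum.inl v, Empty.elim⟩

def ITree.Tau {σ : EventSig} {R : Type} (t : ITree σ R) : ITree σ R :=
  PFunctor.M.mk ⟨Sum.inr (Sum.inl ()), fun _ => t⟩

def ITree.Vis {σ : EventSig} {R : Type} (e : σ.Ev) (k : σ.Ans e → ITree σ R) : ITree σ R :=
  PFunctor.M.mk ⟨Sum.inr (Sum.inr e), k⟩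

section Gov
variable (GovE IOE : Type) (GAns : GovE → Type) (IAns : IOE → Type)

/-- Governed I/O: governance events on the left, I/O events on the right. -/
def GovSig : EventSig := ⟨GovE ⊕ IOE, Sum.elim GAns IAns⟩

variable {GovE IOE GAns IAns} {R : Type}

/-- One step of the governance-safety predicate. -/
def govSafeF (P : Bool → ITree (GovSig GovE IOE GAns IAns) R → Prop)
    (b : Bool) (t : ITree (GovSig GovE IOE GAns IAns) R) : Prop :=
  (∃ v, t = ITree.Ret v) ∨
  (∃ t', t = ITree.Tau t' ∧ P b t') ∨
  (∃ (g : GovE) (k : GAns g → ITree (GovSig GovE IOE GAns IAns) R),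
      t = ITree.Vis (σ := GovSig GovE IOE GAns IAns) (Sum.inl g) k ∧ ∀ r, P true (k r)) ∨
  (b = true ∧ ∃ (e : IOE) (k : IAns e → ITree (GovSig GovE IOE GAns IAns) R),
      t = ITree.Vis (σ := GovSig GovE IOE GAns IAns) (Sum.inr e) k ∧ ∀ x, P true (k x))

/-- `gov_safe` is the greatest fixed point of `govSafeF`. -/
def gov_safe (b : Bool) (t : ITree (GovSig GovE IOE GAns IAns) R) : Prop :=
  ∃ P, (∀ b' t', P b' t' → govSafeF P b' t') ∧ P b t

end Gov

/-- Monadic bind on interaction trees, defined by corecursion. -/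
def ITree.bind {σ : EventSig} {A B : Type} (t : ITree σ A) (k : A → ITree σ B) : ITree σ B :=
  PFunctor.M.corec
    (fun s : ITree σ A ⊕ ITree σ B =>
      match s with
      | Sum.inl t =>
        match PFunctor.M.dest t with
        | ⟨Sum.inl v, _⟩ =>
          let d := PFunctor.M.dest (k v)
          ⟨d.1, fun x => Sum.inr (d.2 x)⟩
        | ⟨Sum.inr (Sum.inl _), f⟩ => ⟨Sum.inr (Sum.inl ()), fun _ => Sum.inl (f ())⟩
        | ⟨Sum.inr (Sum.inr e), f⟩ => ⟨Sum.inr (Sum.inr e), fun x => Sum.inl (f x)⟩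
      | Sum.inr u =>
        let d := PFunctor.M.dest u
        ⟨d.1, fun x => Sum.inr (d.2 x)⟩)
    (Sum.inl t)

section Aux

/-- The corecursion functional used in `ITree.bind`. -/
def ITree.bindF {σ : EventSig} {A B : Type} (k : A → ITree σ B) :
    ITree σ A ⊕ ITree σ B → (ITreeP σ B).Obj (ITree σ A ⊕ ITree σ B) :=
  fun s =>
    match s with
    | Sum.inl t =>
      match PFunctor.M.dest t with
      | ⟨Sum.inl v, _⟩ =>
        let d := PFunctor.M.dest (k v)
        ⟨d.1, fun x => Sum.inr (d.2 x)⟩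
      | ⟨Sum.inr (Sum.inl _), f⟩ => ⟨Sum.inr (Sum.inl ()), fun _ => Sum.inl (f ())⟩
      | ⟨Sum.inr (Sum.inr e), f⟩ => ⟨Sum.inr (Sum.inr e), fun x => Sum.inl (f x)⟩
    | Sum.inr u =>
      let d := PFunctor.M.dest u
      ⟨d.1, fun x => Sum.inr (d.2 x)⟩

theorem ITree.bind_def {σ : EventSig} {A B : Type} (t : ITree σ A) (k : A → ITree σ B) :
    t.bind k = PFunctor.M.corec (ITree.bindF k) (Sum.inl t) := rfl

theorem ITree.corec_inr {σ : EventSig} {A B : Type} (k : A → ITree σ B) (u : ITree σ B) :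
    PFunctor.M.corec (ITree.bindF k) (Sum.inr u) = u := by
  apply PFunctor.M.bisim (fun x y => x = PFunctor.M.corec (ITree.bindF k) (Sum.inr y))
  · rintro x y rfl
    refine ⟨(PFunctor.M.dest y).1,
      fun i => PFunctor.M.corec (ITree.bindF k) (Sum.inr ((PFunctor.M.dest y).2 i)),
      (PFunctor.M.dest y).2, ?_, ?_, fun i => rfl⟩
    · rw [PFunctor.M.dest_corec]; rfl
    · rfl
  · rfl

theorem ITree.bindF_inl_ret {σ : EventSig} {A B : Type} (v : A) (k : A → ITree σ B) :
    ITree.bindF k (Sum.inl (ITree.Ret v)) =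
      ⟨(PFunctor.M.dest (k v)).1, fun x => Sum.inr ((PFunctor.M.dest (k v)).2 x)⟩ := by
  simp only [ITree.bindF, ITree.Ret]
  erw [PFunctor.M.dest_mk]

theorem ITree.bindF_inl_tau {σ : EventSig} {A B : Type} (t : ITree σ A) (k : A → ITree σ B) :
    ITree.bindF k (Sum.inl (ITree.Tau t)) = ⟨Sum.inr (Sum.inl ()), fun _ => Sum.inl t⟩ := by
  simp only [ITree.bindF, ITree.Tau]
  erw [PFunctor.M.dest_mk]

theorem ITree.bindF_inl_vis {σ : EventSig} {A B : Type} (e : σ.Ev) (h : σ.Ans e → ITree σ A)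
    (k : A → ITree σ B) :
    ITree.bindF k (Sum.inl (ITree.Vis e h)) =
      ⟨Sum.inr (Sum.inr e), fun x => Sum.inl (h x)⟩ := by
  simp only [ITree.bindF, ITree.Vis]
  erw [PFunctor.M.dest_mk]

theorem ITree.bind_ret {σ : EventSig} {A B : Type} (v : A) (k : A → ITree σ B) :
    (ITree.Ret v).bind k = k v := by
  have h : PFunctor.M.dest ((ITree.Ret v).bind k) = PFunctor.M.dest (k v) := by
    rw [ITree.bind_def, PFunctor.M.dest_corec, ITree.bindF_inl_ret]
    show (⟨(PFunctor.M.dest (k v)).1,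
      fun x => PFunctor.M.corec (ITree.bindF k) (Sum.inr ((PFunctor.M.dest (k v)).2 x))⟩ :
        (ITreeP σ B).Obj _) = _
    exact Sigma.ext rfl (heq_of_eq (funext fun x => ITree.corec_inr k _))
  exact (PFunctor.M.mk_dest _).symm.trans ((congrArg PFunctor.M.mk h).trans (PFunctor.M.mk_dest _))

theorem ITree.bind_tau {σ : EventSig} {A B : Type} (t : ITree σ A) (k : A → ITree σ B) :
    (ITree.Tau t).bind k = ITree.Tau (t.bind k) := by
  have h : PFunctor.M.dest ((ITree.Tau t).bind k) = PFunctor.M.dest (ITree.Tau (t.bind k)) := by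
    rw [ITree.bind_def, PFunctor.M.dest_corec, ITree.bindF_inl_tau]
    show (⟨Sum.inr (Sum.inl ()), fun _ => PFunctor.M.corec (ITree.bindF k) (Sum.inl t)⟩ :
        (ITreeP σ B).Obj _) = _
    unfold ITree.Tau
    erw [PFunctor.M.dest_mk, ITree.bind_def]
  exact (PFunctor.M.mk_dest _).symm.trans ((congrArg PFunctor.M.mk h).trans (PFunctor.M.mk_dest _))

theorem ITree.bind_vis {σ : EventSig} {A B : Type} (e : σ.Ev) (h : σ.Ans e → ITree σ A)
    (k : A → ITree σ B) :
    (ITree.Vis e h).bind k = ITree.Vis e (fun x => (h x).bind k) := by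
  have hd : PFunctor.M.dest ((ITree.Vis e h).bind k)
      = PFunctor.M.dest (ITree.Vis e (fun x => (h x).bind k)) := by
    rw [ITree.bind_def, PFunctor.M.dest_corec, ITree.bindF_inl_vis]
    show (⟨Sum.inr (Sum.inr e), fun x => PFunctor.M.corec (ITree.bindF k) (Sum.inl (h x))⟩ :
        (ITreeP σ B).Obj _) = _
    unfold ITree.Vis
    erw [PFunctor.M.dest_mk]
    rfl
  exact (PFunctor.M.mk_dest _).symm.trans ((congrArg PFunctor.M.mk hd).trans (PFunctor.M.mk_dest _))

variable {GovE IOE : Type} {GAns : GovE → Type} {IAns : IOE → Type} {R : Type}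

theorem govSafeF_mono {P Q : Bool → ITree (GovSig GovE IOE GAns IAns) R → Prop}
    (hPQ : ∀ b t, P b t → Q b t) {b t} (h : govSafeF P b t) : govSafeF Q b t := by
  rcases h with h | ⟨t', ht', hp⟩ | ⟨g, kk, ht', hp⟩ | ⟨hb, e, kk, ht', hp⟩
  · exact Or.inl h
  · exact Or.inr (Or.inl ⟨t', ht', hPQ _ _ hp⟩)
  · exact Or.inr (Or.inr (Or.inl ⟨g, kk, ht', fun r => hPQ _ _ (hp r)⟩))
  · exact Or.inr (Or.inr (Or.inr ⟨hb, e, kk, ht', fun x => hPQ _ _ (hp x)⟩))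

theorem gov_safe_dest {b} {t : ITree (GovSig GovE IOE GAns IAns) R}
    (h : gov_safe b t) : govSafeF gov_safe b t := by
  obtain ⟨P, hP, hPt⟩ := h
  exact govSafeF_mono (fun b' t' hp => ⟨P, hP, hp⟩) (hP _ _ hPt)

theorem gov_safe_of_false {t : ITree (GovSig GovE IOE GAns IAns) R} (b : Bool)
    (h : gov_safe false t) : gov_safe b t := by
  refine ⟨fun b' t' => gov_safe false t' ∨ gov_safe b' t', fun b' t' hp => ?_, Or.inl h⟩
  rcases hp with hp | hp
  · have := gov_safe_dest hp
    rcases this with h0 | ⟨t'', ht'', hs⟩ | ⟨g, kk, ht'', hs⟩ | ⟨hb, _⟩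
    · exact Or.inl h0
    · exact Or.inr (Or.inl ⟨t'', ht'', Or.inl hs⟩)
    · exact Or.inr (Or.inr (Or.inl ⟨g, kk, ht'', fun r => Or.inr (hs r)⟩))
    · exact absurd hb (by simp)
  · exact govSafeF_mono (fun _ _ => Or.inr) (gov_safe_dest hp)

end Aux

/-- Safety is preserved under monadic bind at the conservative flag `false`. -/
theorem gov_safe_bind {GovE IOE : Type} {GAns : GovE → Type} {IAns : IOE → Type}
    {A B : Type} (t : ITree (GovSig GovE IOE GAns IAns) A)
    (k : A → ITree (GovSig GovE IOE GAns IAns) B)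
    (ht : gov_safe false t) (hk : ∀ r, gov_safe false (k r)) :
    gov_safe false (t.bind k) := by
  refine ⟨fun b u => (∃ t', u = t'.bind k ∧ gov_safe b t') ∨ gov_safe b u,
    fun b u hp => ?_, Or.inl ⟨t, rfl, ht⟩⟩
  rcases hp with ⟨t', rfl, hs⟩ | hs
  · rcases gov_safe_dest hs with ⟨v, rfl⟩ | ⟨t'', rfl, hs'⟩ | ⟨g, kk, rfl, hs'⟩
      | ⟨hb, e, kk, rfl, hs'⟩
    · rw [ITree.bind_ret]
      exact govSafeF_mono (fun _ _ => Or.inr)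
        (gov_safe_dest (gov_safe_of_false b (hk v)))
    · rw [ITree.bind_tau]
      exact Or.inr (Or.inl ⟨t''.bind k, rfl, Or.inl ⟨t'', rfl, hs'⟩⟩)
    · erw [ITree.bind_vis]
      exact Or.inr (Or.inr (Or.inl ⟨g, fun x => (kk x).bind k, rfl,
        fun r => Or.inl ⟨kk r, rfl, hs' r⟩⟩))
    · erw [ITree.bind_vis]
      exact Or.inr (Or.inr (Or.inr ⟨hb, e, fun x => (kk x).bind k, rfl,
        fun x => Or.inl ⟨kk x, rfl, hs' x⟩⟩))
  · exact govSafeF_mono (fun _ _ => Or.inr) (gov_safe_dest hs)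
end

section
/- The normal-form rewriting system is confluent: if a machine term t rewrites to t₁ and to t₂, then there exists a common reduct t₃ with t₁ →* t₃ and t₂ →* t₃. Consequently every term has a unique normal form. -/
/-- Machine terms: pure code, effects, sequencing, branching (with a pure predicate), identity. -/
inductive Term : Type
  | code (f : ℕ → ℕ)
  | effect
  | seq (t₁ t₂ : Term)
  | branch (p : ℕ → Bool) (t₁ t₂ : Term)
  | id

/-- Rewrite relation: code fusion and identity elimination, closed under congruence. -/
inductive Step : Term → Term → Prop
  | fuse (f g : ℕ → ℕ) : Step (.seq (.code f) (.code g)) (.code (g ∘ f))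
  | idL (t : Term) : Step (.seq .id t) t
  | idR (t : Term) : Step (.seq t .id) t
  | seqL {t t' u : Term} : Step t t' → Step (.seq t u) (.seq t' u)
  | seqR {t u u' : Term} : Step u u' → Step (.seq t u) (.seq t u')
  | brL {p : ℕ → Bool} {t t' u : Term} : Step t t' → Step (.branch p t u) (.branch p t' u)
  | brR {p : ℕ → Bool} {t u u' : Term} : Step u u' → Step (.branch p t u) (.branch p t u')

/-- A term is in normal form when no rewrite applies. -/
def NormalForm (t : Term) : Prop := ∀ u, ¬ Step t u

open Relation

lemma rt_seqL {t t' u : Term} (h : ReflTransGen Step t t') :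
    ReflTransGen Step (.seq t u) (.seq t' u) := by
  induction h with
  | refl => exact .refl
  | tail _ h ih => exact ih.tail (.seqL h)

lemma rt_seqR {t u u' : Term} (h : ReflTransGen Step u u') :
    ReflTransGen Step (.seq t u) (.seq t u') := by
  induction h with
  | refl => exact .refl
  | tail _ h ih => exact ih.tail (.seqR h)

lemma rt_brL {p : ℕ → Bool} {t t' u : Term} (h : ReflTransGen Step t t') :
    ReflTransGen Step (.branch p t u) (.branch p t' u) := by
  induction h with
  | refl => exact .refl
  | tail _ h ih => exact ih.tail (.brL h)

lemma rt_brR {p : ℕ → Bool} {t u u' : Term} (h : ReflTransGen Step u u') :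
    ReflTransGen Step (.branch p t u) (.branch p t u') := by
  induction h with
  | refl => exact .refl
  | tail _ h ih => exact ih.tail (.brR h)

lemma rg_seqL {t t' u : Term} (h : ReflGen Step t t') :
    ReflGen Step (.seq t u) (.seq t' u) := by
  cases h with
  | refl => exact .refl
  | single h => exact .single (.seqL h)

lemma rg_seqR {t u u' : Term} (h : ReflGen Step u u') :
    ReflGen Step (.seq t u) (.seq t u') := by
  cases h with
  | refl => exact .refl
  | single h => exact .single (.seqR h)

lemma rg_brL {p : ℕ → Bool} {t t' u : Term} (h : ReflGen Step t t') :
    ReflGen Step (.branch p t u) (.branch p t' u) := by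
  cases h with
  | refl => exact .refl
  | single h => exact .single (.brL h)

lemma rg_brR {p : ℕ → Bool} {t u u' : Term} (h : ReflGen Step u u') :
    ReflGen Step (.branch p t u) (.branch p t u') := by
  cases h with
  | refl => exact .refl
  | single h => exact .single (.brR h)

lemma step_strip {a b c : Term} (h1 : Step a b) (h2 : Step a c) :
    ∃ d, ReflGen Step b d ∧ ReflTransGen Step c d := by
  induction h1 generalizing c with
  | fuse f g =>
    cases h2 with
    | fuse => exact ⟨_, .refl, .refl⟩
    | seqL h => cases h
    | seqR h => cases h
  | idL t =>
    cases h2 with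
    | idL => exact ⟨t, .refl, .refl⟩
    | idR => exact ⟨_, .refl, .refl⟩
    | seqL h => cases h
    | seqR h => exact ⟨_, .single h, .single (.idL _)⟩
  | idR t =>
    cases h2 with
    | idR => exact ⟨t, .refl, .refl⟩
    | idL => exact ⟨_, .refl, .refl⟩
    | seqR h => cases h
    | seqL h => exact ⟨_, .single h, .single (.idR _)⟩
  | seqL h ih =>
    cases h2 with
    | fuse => cases h
    | idL => cases h
    | idR => exact ⟨_, .single (.idR _), .single h⟩
    | seqL h' =>
      obtain ⟨d, hd1, hd2⟩ := ih h'
      exact ⟨_, rg_seqL hd1, rt_seqL hd2⟩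
    | seqR h' => exact ⟨_, .single (.seqR h'), .single (.seqL h)⟩
  | seqR h ih =>
    cases h2 with
    | fuse => cases h
    | idR => cases h
    | idL => exact ⟨_, .single (.idL _), .single h⟩
    | seqR h' =>
      obtain ⟨d, hd1, hd2⟩ := ih h'
      exact ⟨_, rg_seqR hd1, rt_seqR hd2⟩
    | seqL h' => exact ⟨_, .single (.seqL h'), .single (.seqR h)⟩
  | brL h ih =>
    cases h2 with
    | brL h' =>
      obtain ⟨d, hd1, hd2⟩ := ih h'
      exact ⟨_, rg_brL hd1, rt_brL hd2⟩
    | brR h' => exact ⟨_, .single (.brR h'), .single (.brL h)⟩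
  | brR h ih =>
    cases h2 with
    | brR h' =>
      obtain ⟨d, hd1, hd2⟩ := ih h'
      exact ⟨_, rg_brR hd1, rt_brR hd2⟩
    | brL h' => exact ⟨_, .single (.brL h'), .single (.brR h)⟩

/-- Confluence, and consequently uniqueness of normal forms. -/
theorem step_confluent :
    (∀ t t₁ t₂ : Term, Relation.ReflTransGen Step t t₁ → Relation.ReflTransGen Step t t₂ →
      ∃ t₃, Relation.ReflTransGen Step t₁ t₃ ∧ Relation.ReflTransGen Step t₂ t₃) ∧
    (∀ t t₁ t₂ : Term, Relation.ReflTransGen Step t t₁ → Relation.ReflTransGen Step t t₂ →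
      NormalForm t₁ → NormalForm t₂ → t₁ = t₂) := by
  have conf : ∀ t t₁ t₂ : Term, Relation.ReflTransGen Step t t₁ →
      Relation.ReflTransGen Step t t₂ →
      ∃ t₃, Relation.ReflTransGen Step t₁ t₃ ∧ Relation.ReflTransGen Step t₂ t₃ := by
    intro t t₁ t₂ h1 h2
    exact Relation.church_rosser (fun a b c hb hc => step_strip hb hc) h1 h2
  refine ⟨conf, ?_⟩
  intro t t₁ t₂ h1 h2 n1 n2
  obtain ⟨t₃, h13, h23⟩ := conf t t₁ t₂ h1 h2
  have e1 : t₁ = t₃ := by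
    cases h13.cases_head with
    | inl h => exact h
    | inr h => exact absurd h.choose_spec.1 (n1 _)
  have e2 : t₂ = t₃ := by
    cases h23.cases_head with
    | inl h => exact h
    | inr h => exact absurd h.choose_spec.1 (n2 _)
  rw [e1, e2]
end
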